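/- arXiv:math/0112285 — 2 statements merged into one kernel-verified Lean document; each statement's English description precedes it below -/
import Mathlib

section
/- With the setup of non-intersecting lattice path families from A_ℓ = (d+1−ℓ, d) to E_{σ(ℓ)} = (d−κ_{σ(ℓ)}, κ_{σ(ℓ)}+i_{σ(ℓ)}): any multiset of lattice points with y-coordinate > d lying on the paths of such a family satisfies the chain condition, namely: for every q with 1 ≤ q ≤ d, any subset of the multiset that forms a chain and is contained in R(E_q) has size at most d − κ_q − q. -/
def NEStep (p q : ℤ × ℤ) : Prop := q = (p.1 + 1, p.2) ∨ q = (p.1, p.2 + 1)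

def IsNEPathFrom (P : List (ℤ × ℤ)) (A E : ℤ × ℤ) : Prop :=
  P.head? = some A ∧ P.getLast? = some E ∧ List.Chain' NEStep P

/-- A chain of points: strictly increasing x-coordinates and strictly decreasing
y-coordinates. -/
def IsPtChain (C : Finset (ℤ × ℤ)) : Prop :=
  ∀ p ∈ C, ∀ r ∈ C, p ≠ r → (p.1 < r.1 ∧ r.2 < p.2) ∨ (r.1 < p.1 ∧ p.2 < r.2)

lemma neStep_le {p q : ℤ × ℤ} (h : NEStep p q) : p.1 ≤ q.1 ∧ p.2 ≤ q.2 := by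
  rcases h with h | h <;> subst h <;> constructor <;> simp

lemma chain_head_le (a : ℤ × ℤ) (l : List (ℤ × ℤ)) (h : List.Chain NEStep a l) :
    ∀ b ∈ l, a.1 ≤ b.1 ∧ a.2 ≤ b.2 := by
  induction l generalizing a with
  | nil => simp
  | cons c l ih =>
    cases h with
    | cons_cons hac hcl =>
      intro b hb
      rcases List.mem_cons.mp hb with rfl | hb
      · exact neStep_le hac
      · have h1 := neStep_le hac
        have h2 := ih c hcl b hb
        exact ⟨h1.1.trans h2.1, h1.2.trans h2.2⟩

lemma chain'_head_le (P : List (ℤ × ℤ)) (Ahd : ℤ × ℤ) (h : List.Chain' NEStep P)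
    (hA : P.head? = some Ahd) : ∀ p ∈ P, Ahd.1 ≤ p.1 ∧ Ahd.2 ≤ p.2 := by
  cases P with
  | nil => simp at hA
  | cons x t =>
    simp only [List.head?_cons, Option.some.injEq] at hA
    subst hA
    intro p hp
    rcases List.mem_cons.mp hp with rfl | hp
    · exact ⟨le_refl _, le_refl _⟩
    · exact chain_head_le _ _ h p hp

lemma chain'_le_getLast : ∀ (P : List (ℤ × ℤ)) (Elst : ℤ × ℤ),
    List.Chain' NEStep P → P.getLast? = some Elst →
    ∀ p ∈ P, p.1 ≤ Elst.1 ∧ p.2 ≤ Elst.2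
  | [], Elst, _, hE => by simp at hE
  | [x], Elst, _, hE => by
      simp only [List.getLast?_singleton, Option.some.injEq] at hE
      subst hE
      intro p hp
      simp only [List.mem_singleton] at hp
      subst hp
      exact ⟨le_refl _, le_refl _⟩
  | x :: y :: l, Elst, h, hE => by
      have hE' : (y :: l).getLast? = some Elst := by
        simpa using hE
      have h' : List.Chain' NEStep (y :: l) := h.tail
      intro p hp
      rcases List.mem_cons.mp hp with rfl | hp'
      · have hxy : NEStep p y := (List.isChain_cons_cons.mp h).1
        have h2 := chain'_le_getLast (y :: l) Elst h' hE' y (by simp)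
        have h1 := neStep_le hxy
        exact ⟨h1.1.trans h2.1, h1.2.trans h2.2⟩
      · exact chain'_le_getLast (y :: l) Elst h' hE' p hp'

lemma chain'_comparable (P : List (ℤ × ℤ)) (h : List.Chain' NEStep P) :
    ∀ a ∈ P, ∀ b ∈ P, (a.1 ≤ b.1 ∧ a.2 ≤ b.2) ∨ (b.1 ≤ a.1 ∧ b.2 ≤ a.2) := by
  induction P with
  | nil => simp
  | cons x t ih =>
    have hx : List.Chain NEStep x t := h
    intro a ha b hb
    rcases List.mem_cons.mp ha with ha | ha
    · rcases List.mem_cons.mp hb with hb | hb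
      · left; rw [ha, hb]; exact ⟨le_refl _, le_refl _⟩
      · left; rw [ha]; exact chain_head_le _ _ hx b hb
    · rcases List.mem_cons.mp hb with hb | hb
      · right; rw [hb]; exact chain_head_le _ _ hx a ha
      · exact ih h.tail a ha b hb

/-- Any multiset of lattice points with y-coordinate `> d` lying on the paths of a
family of non-intersecting NE lattice paths from `A_ℓ = (d+1-ℓ,d)` to
`E_{σ(ℓ)} = (d-κ_{σ(ℓ)}, κ_{σ(ℓ)}+i_{σ(ℓ)})` satisfies the chain condition: for every
`q`, any chain of points of the multiset lying in `R(E_q)` (weakly left of and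
strictly above `E_q`) has at most `d - κ_q - q` elements. -/
theorem path_points_satisfy_chain_condition (n d : ℕ) (hd : 1 ≤ d) (hdn : d ≤ n)
    (i j : ℕ → ℕ)
    (hi : StrictMonoOn i (Set.Icc 1 d)) (hj : StrictMonoOn j (Set.Icc 1 d))
    (hiN : ∀ ℓ ∈ Set.Icc 1 d, i ℓ ∈ Set.Icc 1 n)
    (hjN : ∀ ℓ ∈ Set.Icc 1 d, j ℓ ∈ Set.Icc 1 n)
    (hji : ∀ ℓ ∈ Set.Icc 1 d, j ℓ ≤ i ℓ)
    (κ : ℕ → ℕ)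
    (hκ : ∀ q, κ q = ((Finset.Icc 1 d).filter (fun ℓ => i q < j ℓ)).card)
    (A E : ℕ → ℤ × ℤ)
    (hA : ∀ ℓ, A ℓ = ((d : ℤ) + 1 - ℓ, (d : ℤ)))
    (hE : ∀ q, E q = ((d : ℤ) - κ q, (κ q : ℤ) + i q))
    (σ : ℕ → ℕ) (hσ : Set.BijOn σ (Set.Icc 1 d) (Set.Icc 1 d))
    (P : ℕ → List (ℤ × ℤ))
    (hP : ∀ ℓ ∈ Set.Icc 1 d, IsNEPathFrom (P ℓ) (A ℓ) (E (σ ℓ)))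
    (hnon : ∀ k ∈ Set.Icc 1 d, ∀ l ∈ Set.Icc 1 d, k ≠ l → ∀ p ∈ P k, p ∉ P l)
    (S : Multiset (ℤ × ℤ))
    (hS : ∀ p ∈ S, (d : ℤ) < p.2 ∧ ∃ ℓ ∈ Set.Icc 1 d, p ∈ P ℓ) :
    ∀ q ∈ Set.Icc 1 d, ∀ C : Finset (ℤ × ℤ),
      (∀ p ∈ C, p ∈ S) → IsPtChain C →
      (∀ p ∈ C, p.1 ≤ (E q).1 ∧ (E q).2 < p.2) →
      (C.card : ℤ) ≤ (d : ℤ) - κ q - q := by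
  classical
  intro q hq C hCS hchain hCR
  obtain ⟨hq1, hqd⟩ := hq
  -- κ is bounded by d
  have hκd : ∀ m, κ m ≤ d := by
    intro m
    rw [hκ]
    calc ((Finset.Icc 1 d).filter (fun ℓ => i m < j ℓ)).card
        ≤ (Finset.Icc 1 d).card := Finset.card_filter_le _ _
      _ = d := by rw [Nat.card_Icc]; omega
  -- κ is antitone on [1,d]
  have hκmono : ∀ a ∈ Set.Icc 1 d, ∀ b ∈ Set.Icc 1 d, a ≤ b → κ b ≤ κ a := by
    intro a ha b hb hab
    have hiab : i a ≤ i b := by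
      rcases eq_or_lt_of_le hab with rfl | h
      · exact le_refl _
      · exact (hi ha hb h).le
    rw [hκ, hκ]
    apply Finset.card_le_card
    intro ℓ hℓ
    simp only [Finset.mem_filter] at hℓ ⊢
    exact ⟨hℓ.1, by omega⟩
  -- κ + i is monotone on [1,d]
  have hfmono : ∀ a ∈ Set.Icc 1 d, ∀ b ∈ Set.Icc 1 d, a ≤ b → κ a + i a ≤ κ b + i b := by
    intro a ha b hb hab
    have hiab : i a ≤ i b := by
      rcases eq_or_lt_of_le hab with rfl | h
      · exact le_refl _
      · exact (hi ha hb h).le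
    set Fa := (Finset.Icc 1 d).filter (fun ℓ => i a < j ℓ) with hFa
    set Fb := (Finset.Icc 1 d).filter (fun ℓ => i b < j ℓ) with hFb
    have hsub : Fb ⊆ Fa := by
      intro ℓ hℓ
      simp only [hFa, hFb, Finset.mem_filter] at hℓ ⊢
      exact ⟨hℓ.1, by omega⟩
    have hdiff : (Fa \ Fb).card ≤ i b - i a := by
      have hmap : ∀ ℓ ∈ Fa \ Fb, j ℓ ∈ Finset.Ioc (i a) (i b) := by
        intro ℓ hℓ
        simp only [Finset.mem_sdiff, hFa, hFb, Finset.mem_filter] at hℓ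
        simp only [Finset.mem_Ioc]
        constructor
        · exact hℓ.1.2
        · by_contra hc
          exact hℓ.2 ⟨hℓ.1.1, by omega⟩
      have hinj : Set.InjOn j (Fa \ Fb : Finset ℕ) := by
        intro x hx y hy hxy
        simp only [Finset.coe_sdiff, Set.mem_diff, Finset.mem_coe, hFa,
          Finset.mem_filter, Finset.mem_Icc] at hx hy
        exact hj.injOn ⟨hx.1.1.1, hx.1.1.2⟩ ⟨hy.1.1.1, hy.1.1.2⟩ hxy
      calc (Fa \ Fb).card ≤ (Finset.Ioc (i a) (i b)).card :=
            Finset.card_le_card_of_injOn j hmap hinj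
        _ = i b - i a := by rw [Nat.card_Ioc]
    have hcards : (Fa \ Fb).card + Fb.card = Fa.card := Finset.card_sdiff_add_card_eq_card hsub
    rw [hκ, hκ, ← hFa, ← hFb]
    omega
  -- each path is nonempty and starts at A ℓ, ends at E (σ ℓ)
  have hlast : ∀ ℓ ∈ Set.Icc 1 d, ∀ p ∈ P ℓ, p.1 ≤ (E (σ ℓ)).1 ∧ p.2 ≤ (E (σ ℓ)).2 := by
    intro ℓ hℓ
    obtain ⟨h1, h2, h3⟩ := hP ℓ hℓ
    exact chain'_le_getLast (P ℓ) (E (σ ℓ)) h3 h2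
  have hhead : ∀ ℓ ∈ Set.Icc 1 d, ∀ p ∈ P ℓ, (A ℓ).1 ≤ p.1 ∧ (A ℓ).2 ≤ p.2 := by
    intro ℓ hℓ
    obtain ⟨h1, h2, h3⟩ := hP ℓ hℓ
    exact chain'_head_le (P ℓ) (A ℓ) h3 h1
  -- κ (σ ℓ) < ℓ  (the start must be weakly left of the end)
  have hκσ : ∀ ℓ ∈ Set.Icc 1 d, κ (σ ℓ) < ℓ := by
    intro ℓ hℓ
    obtain ⟨h1, h2, h3⟩ := hP ℓ hℓ
    have hmem : A ℓ ∈ P ℓ := by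
      cases hPl : P ℓ with
      | nil => rw [hPl] at h1; simp at h1
      | cons x t =>
        rw [hPl] at h1
        simp only [List.head?_cons, Option.some.injEq] at h1
        rw [← h1]
        exact List.mem_cons_self
    have := (hlast ℓ hℓ (A ℓ) hmem).1
    rw [hA, hE] at this
    simp only at this
    omega
  set B := (Finset.Icc 1 d).filter (fun ℓ => σ ℓ ≤ q) with hBdef
  have hBsub : B ⊆ Finset.Icc (κ q + 1) d := by
    intro ℓ hℓ
    simp only [hBdef, Finset.mem_filter, Finset.mem_Icc] at hℓ
    obtain ⟨⟨hℓ1, hℓd⟩, hσℓ⟩ := hℓ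
    have hℓI : ℓ ∈ Set.Icc 1 d := ⟨hℓ1, hℓd⟩
    have hσI : σ ℓ ∈ Set.Icc 1 d := hσ.mapsTo hℓI
    have h1 := hκσ ℓ hℓI
    have h2 := hκmono (σ ℓ) hσI q ⟨hq1, hqd⟩ hσℓ
    simp only [Finset.mem_Icc]
    omega
  have hBub : B.card ≤ q := by
    have h1 : B.card ≤ (Finset.Icc 1 q).card := by
      apply Finset.card_le_card_of_injOn σ
      · intro ℓ hℓ
        simp only [hBdef, Finset.mem_coe, Finset.mem_filter, Finset.mem_Icc] at hℓ
        have hσI : σ ℓ ∈ Set.Icc 1 d := hσ.mapsTo ⟨hℓ.1.1, hℓ.1.2⟩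
        simp only [Finset.mem_coe, Finset.mem_Icc]
        exact ⟨hσI.1, hℓ.2⟩
      · intro x hx y hy hxy
        simp only [hBdef, Finset.coe_filter, Set.mem_setOf_eq, Finset.mem_Icc] at hx hy
        exact hσ.injOn ⟨hx.1.1, hx.1.2⟩ ⟨hy.1.1, hy.1.2⟩ hxy
    rw [Nat.card_Icc] at h1
    omega
  have hBlb : q ≤ B.card := by
    have : (Finset.Icc 1 q).card ≤ B.card := by
      apply Finset.card_le_card_of_injOn (fun m => Function.invFunOn σ (Set.Icc 1 d) m)
      · intro m hm
        simp only [Finset.mem_coe, Finset.mem_Icc] at hm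
        have hmI : m ∈ Set.Icc 1 d := ⟨hm.1, hm.2.trans hqd⟩
        have hex : ∃ a ∈ Set.Icc 1 d, σ a = m := by
          obtain ⟨a, ha, hσa⟩ := hσ.surjOn hmI
          exact ⟨a, ha, hσa⟩
        have hmem := Function.invFunOn_mem hex
        have heq := Function.invFunOn_eq hex
        simp only [hBdef, Finset.mem_coe, Finset.mem_filter, Finset.mem_Icc]
        exact ⟨⟨hmem.1, hmem.2⟩, by rw [heq]; exact hm.2⟩
      · intro x hx y hy hxy
        simp only [Finset.mem_coe, Finset.mem_Icc] at hx hy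
        have hxI : x ∈ Set.Icc 1 d := ⟨hx.1, hx.2.trans hqd⟩
        have hyI : y ∈ Set.Icc 1 d := ⟨hy.1, hy.2.trans hqd⟩
        have hexx : ∃ a ∈ Set.Icc 1 d, σ a = x := by
          obtain ⟨a, ha, hσa⟩ := hσ.surjOn hxI
          exact ⟨a, ha, hσa⟩
        have hexy : ∃ a ∈ Set.Icc 1 d, σ a = y := by
          obtain ⟨a, ha, hσa⟩ := hσ.surjOn hyI
          exact ⟨a, ha, hσa⟩
        have h1 := Function.invFunOn_eq hexx
        have h2 := Function.invFunOn_eq hexy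
        have hxy' : Function.invFunOn σ (Set.Icc 1 d) x
            = Function.invFunOn σ (Set.Icc 1 d) y := hxy
        rw [← h1, ← h2, hxy']
    rw [Nat.card_Icc] at this
    omega
  -- the point-to-path assignment
  set g : (ℤ × ℤ) → ℕ := fun p =>
    if h : ∃ ℓ ∈ Set.Icc 1 d, p ∈ P ℓ then h.choose else 0 with hgdef
  have hg : ∀ p ∈ C, g p ∈ Set.Icc 1 d ∧ p ∈ P (g p) := by
    intro p hp
    have hex := (hS p (hCS p hp)).2
    simp only [hgdef, dif_pos hex]
    exact ⟨hex.choose_spec.1, hex.choose_spec.2⟩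
  -- g maps C into Icc (κ q + 1) d \ B
  have hgmem : ∀ p ∈ C, g p ∈ Finset.Icc (κ q + 1) d \ B := by
    intro p hp
    obtain ⟨hgI, hgP⟩ := hg p hp
    obtain ⟨hx, hy⟩ := hCR p hp
    rw [hE] at hx hy
    simp only at hx hy
    have hhd := (hhead (g p) hgI p hgP).1
    rw [hA] at hhd
    simp only at hhd
    have hlt : κ q + 1 ≤ g p := by omega
    have hσgI : σ (g p) ∈ Set.Icc 1 d := hσ.mapsTo hgI
    have hls := (hlast (g p) hgI p hgP).2
    rw [hE] at hls
    simp only at hls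
    -- σ (g p) > q
    have hσgq : q < σ (g p) := by
      by_contra hc
      push_neg at hc
      have := hfmono (σ (g p)) hσgI q ⟨hq1, hqd⟩ hc
      omega
    simp only [Finset.mem_sdiff, Finset.mem_Icc, hBdef, Finset.mem_filter, not_and]
    exact ⟨⟨hlt, hgI.2⟩, fun _ => by omega⟩
  -- g is injective on C
  have hginj : Set.InjOn g (C : Set (ℤ × ℤ)) := by
    intro p hp r hr hpr
    by_contra hne
    obtain ⟨hgIp, hgPp⟩ := hg p hp
    obtain ⟨hgIr, hgPr⟩ := hg r hr
    rw [hpr] at hgPp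
    obtain ⟨_, _, h3⟩ := hP (g r) hgIr
    have hcmp := chain'_comparable (P (g r)) h3 p hgPp r hgPr
    have hch := hchain p hp r hr hne
    rcases hcmp with ⟨h1, h2⟩ | ⟨h1, h2⟩ <;> rcases hch with ⟨h3', h4⟩ | ⟨h3', h4⟩ <;> omega
  have hcard : C.card ≤ (Finset.Icc (κ q + 1) d \ B).card :=
    Finset.card_le_card_of_injOn g hgmem hginj
  have hsd : (Finset.Icc (κ q + 1) d \ B).card + B.card = (Finset.Icc (κ q + 1) d).card :=
    Finset.card_sdiff_add_card_eq_card hBsub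
  rw [Nat.card_Icc] at hsd
  have hκqd := hκd q
  omega
end

section
/- Let w and τ be minimal representatives of cosets of S_n/(S_d × S_{n-d}) with τ ≤ w in the induced Bruhat order, identified with (i_1,…,i_d) and (j_1,…,j_d), and let κ_q = |{ℓ : i_q < j_ℓ}|. If a multiset S of reflections s = (x,y) with 1 ≤ x ≤ d and d+1 ≤ y ≤ n satisfies property (S1) — for every chain s_1 > s_2 > … > s_t of pairwise commuting reflections all from S, one has w ≥ τ s_1 ⋯ s_t in the induced Bruhat order — then S, viewed as a multiset of points in the plane, satisfies the chain condition: for every q, every chain of points of S contained in R(E_q) has at most d − κ_q − q elements. -/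
/-- Apply a list of transpositions `(x,y)` (as functions on positions in `ℕ`) to `x`. -/
def applySwaps (L : List (ℕ × ℕ)) (x : ℕ) : ℕ :=
  L.foldr (fun s y => if y = s.1 then s.2 else if y = s.2 then s.1 else y) x

/-- The increasingly sorted list of values `f(1),…,f(d)`. -/
def sortedFirstVals (d : ℕ) (f : ℕ → ℕ) : List ℕ :=
  ((Finset.Icc 1 d).image f).sort (· ≤ ·)

/-- `w ≥ π` in the induced Bruhat order on `S_n/(S_d × S_{n-d})`: the sorted vector
of the first `d` values of `π` is componentwise `≤ (i₁,…,i_d)`, where `w ↔ i`. -/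
def DominatedByW (d : ℕ) (f i : ℕ → ℕ) : Prop :=
  ∀ k, k < d → (sortedFirstVals d f).getD k 0 ≤ i (k + 1)

/-- Property (S1) for a multiset `S` of reflections: for every chain
`s₁ > s₂ > … > s_t` of pairwise commuting reflections from `S` (strictly increasing
first coordinates and strictly decreasing second coordinates), one has
`w ≥ τ·s₁⋯s_t` in the induced Bruhat order. -/
def S1Prop (d : ℕ) (τ i : ℕ → ℕ) (S : Multiset (ℕ × ℕ)) : Prop :=
  ∀ L : List (ℕ × ℕ), (∀ s ∈ L, s ∈ S) →
    L.Pairwise (fun a b => a.1 < b.1 ∧ b.2 < a.2) →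
    DominatedByW d (fun x => τ (applySwaps L x)) i

/-- A chain of points in `ℕ × ℕ`. -/
def IsPtChainN (C : Finset (ℕ × ℕ)) : Prop :=
  ∀ p ∈ C, ∀ r ∈ C, p ≠ r → (p.1 < r.1 ∧ r.2 < p.2) ∨ (r.1 < p.1 ∧ p.2 < r.2)

lemma applySwaps_cons (s : ℕ × ℕ) (L : List (ℕ × ℕ)) (x : ℕ) :
    applySwaps (s :: L) x =
      (if applySwaps L x = s.1 then s.2 else if applySwaps L x = s.2 then s.1
        else applySwaps L x) := rfl

lemma applySwaps_id (L : List (ℕ × ℕ)) (x : ℕ)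
    (h : ∀ s ∈ L, s.1 ≠ x ∧ s.2 ≠ x) : applySwaps L x = x := by
  induction L with
  | nil => rfl
  | cons s T ih =>
    have hx := h s (List.mem_cons_self ..)
    have ht : applySwaps T x = x := ih fun s' hs' => h s' (List.mem_cons_of_mem _ hs')
    rw [applySwaps_cons, ht, if_neg (fun he => hx.1 he.symm), if_neg (fun he => hx.2 he.symm)]

lemma applySwaps_swap (D : ℕ) (L : List (ℕ × ℕ))
    (hb : ∀ s ∈ L, s.1 ≤ D ∧ D < s.2)
    (hpw : L.Pairwise (fun u v => u.1 ≠ v.1 ∧ u.2 ≠ v.2))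
    (a b : ℕ) (hab : (a, b) ∈ L) : applySwaps L a = b := by
  induction L with
  | nil => exact absurd hab List.not_mem_nil
  | cons s T ih =>
    rw [List.pairwise_cons] at hpw
    rcases List.mem_cons.1 hab with h | h
    · have hTa : applySwaps T a = a := by
        refine applySwaps_id _ _ fun s' hs' => ⟨?_, ?_⟩
        · have h2 := (hpw.1 s' hs').1; rw [← h] at h2; exact fun he => h2 he.symm
        · have h1 := (hb (a, b) hab).1
          have h2 := (hb s' (List.mem_cons_of_mem _ hs')).2
          omega
      rw [applySwaps_cons, hTa, ← h, if_pos rfl]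
    · have hTb : applySwaps T a = b := ih (fun s' hs' => hb s' (List.mem_cons_of_mem _ hs'))
        hpw.2 h
      have hb1 : b ≠ s.1 := by
        have h1 := (hb (a, b) hab).2
        have h2 := (hb s (List.mem_cons_self ..)).1
        omega
      have hb2 : b ≠ s.2 := fun he => (hpw.1 _ h).2 he.symm
      rw [applySwaps_cons, hTb, if_neg hb1, if_neg hb2]

lemma sorted_getD_big {l : List ℕ} (hs : l.Pairwise (· ≤ ·)) {k v : ℕ}
    (hk : k < l.length)
    (hc : l.length ≤ k + (l.filter (fun z => decide (v < z))).length) :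
    v < l.getD k 0 := by
  by_contra hle
  push_neg at hle
  rw [List.getD_eq_getElem _ _ hk] at hle
  have htake : ∀ x ∈ l.take (k + 1), ¬ (v < x) := by
    intro x hx
    obtain ⟨j, hj, hxe⟩ := List.getElem_of_mem hx
    rw [List.getElem_take] at hxe
    have hjk : j ≤ k := by
      rw [List.length_take] at hj; omega
    have hjl : j < l.length := by rw [List.length_take] at hj; omega
    have : l[j] ≤ l[k] := by
      rcases Nat.lt_or_ge j k with h | h
      · exact (List.pairwise_iff_getElem.1 hs) j k hjl hk h
      · have : j = k := by omega
        subst this; exact le_refl _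
    omega
  have hsplit : l.filter (fun z => decide (v < z)) =
      (l.take (k+1)).filter (fun z => decide (v < z)) ++
      (l.drop (k+1)).filter (fun z => decide (v < z)) := by
    rw [← List.filter_append, List.take_append_drop]
  have h0 : ((l.take (k+1)).filter (fun z => decide (v < z))).length = 0 := by
    rw [List.length_eq_zero_iff, List.filter_eq_nil_iff]
    intro x hx
    simpa using htake x hx
  have h1 : ((l.drop (k+1)).filter (fun z => decide (v < z))).length ≤ l.length - (k+1) := by
    calc _ ≤ (l.drop (k+1)).length := List.length_filter_le _ _
    _ = l.length - (k+1) := List.length_drop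
  rw [hsplit, List.length_append, h0] at hc
  omega

lemma filter_sort_length (G : Finset ℕ) (p : ℕ → Prop) [DecidablePred p] :
    ((G.sort (· ≤ ·)).filter (fun z => decide (p z))).length = (G.filter p).card := by
  have h1 : ((G.sort (· ≤ ·) : List ℕ) : Multiset ℕ) = G.val := Finset.sort_eq _ _
  have h2 : (G.filter p).val = Multiset.filter p G.val := Finset.filter_val _ _
  have h3 : Multiset.filter p ((G.sort (· ≤ ·) : List ℕ) : Multiset ℕ)
      = ((G.sort (· ≤ ·)).filter (fun z => decide (p z)) : List ℕ) :=
    Multiset.filter_coe (p := p) _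
  rw [← Multiset.coe_card, ← h3, h1, ← h2]
  rfl

/-- Any multiset of reflections satisfying (S1) satisfies the chain condition:
for every `q`, every chain of points of `S` contained in `R(E_q)` (weakly left of
`d - κ_q` and strictly above `κ_q + i_q`) has at most `d - κ_q - q` elements. -/
theorem S1_implies_chain_condition (n d : ℕ) (hd : 1 ≤ d) (hdn : d ≤ n)
    (τ i : ℕ → ℕ)
    (hbij : Set.BijOn τ (Set.Icc 1 n) (Set.Icc 1 n))
    (hmono1 : StrictMonoOn τ (Set.Icc 1 d))
    (hmono2 : StrictMonoOn τ (Set.Icc (d + 1) n))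
    (hi : StrictMonoOn i (Set.Icc 1 d))
    (hiN : ∀ ℓ ∈ Set.Icc 1 d, i ℓ ∈ Set.Icc 1 n)
    (hle : ∀ ℓ ∈ Set.Icc 1 d, τ ℓ ≤ i ℓ)
    (κ : ℕ → ℕ)
    (hκ : ∀ q, κ q = ((Finset.Icc 1 d).filter (fun ℓ => i q < τ ℓ)).card)
    (S : Multiset (ℕ × ℕ))
    (hSrefl : ∀ s ∈ S, 1 ≤ s.1 ∧ s.1 ≤ d ∧ d + 1 ≤ s.2 ∧ s.2 ≤ n)
    (hS1 : S1Prop d τ i S) :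
    ∀ q ∈ Set.Icc 1 d, ∀ C : Finset (ℕ × ℕ),
      (∀ p ∈ C, p ∈ S) → IsPtChainN C →
      (∀ p ∈ C, (p.1 : ℤ) ≤ (d : ℤ) - κ q ∧ (κ q : ℤ) + i q < (p.2 : ℤ)) →
      (C.card : ℤ) ≤ (d : ℤ) - κ q - q := by
  intro q hq C hCS hchain hR
  obtain ⟨hq1, hqd⟩ := hq
  have hκq := hκ q
  have hiq : 1 ≤ i q ∧ i q ≤ n := hiN q ⟨hq1, hqd⟩
  -- κ q + q ≤ d
  have hκle : κ q + q ≤ d := by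
    have hsub : (Finset.Icc 1 d).filter (fun ℓ => i q < τ ℓ) ⊆ Finset.Icc (q + 1) d := by
      intro ℓ hℓ
      simp only [Finset.mem_filter, Finset.mem_Icc] at hℓ ⊢
      obtain ⟨⟨h1, h2⟩, h3⟩ := hℓ
      refine ⟨?_, h2⟩
      by_contra hc
      push_neg at hc
      have hℓq : ℓ ≤ q := by omega
      have hm : i ℓ ≤ i q := hi.monotoneOn ⟨h1, by omega⟩ ⟨hq1, hqd⟩ hℓq
      have := hle ℓ ⟨h1, h2⟩
      omega
    have := Finset.card_le_card hsub
    rw [Nat.card_Icc] at this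
    omega
  have hκd : κ q ≤ d := by omega
  -- τ is > i q on positions in (d - κ q, d]
  have hτpos : ∀ x, d - κ q < x → x ≤ d → i q < τ x := by
    intro x hx1 hx2
    by_contra hc
    push_neg at hc
    have hx0 : 1 ≤ x := by omega
    have hsub : (Finset.Icc 1 d).filter (fun ℓ => i q < τ ℓ) ⊆ Finset.Icc (x + 1) d := by
      intro ℓ hℓ
      simp only [Finset.mem_filter, Finset.mem_Icc] at hℓ ⊢
      obtain ⟨⟨h1, h2⟩, h3⟩ := hℓ
      refine ⟨?_, h2⟩
      by_contra hcc
      push_neg at hcc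
      have hℓx : ℓ ≤ x := by omega
      rcases eq_or_lt_of_le hℓx with he | hlt
      · subst he; omega
      · have : τ ℓ < τ x := hmono1 ⟨h1, by omega⟩ ⟨hx0, hx2⟩ hlt
        omega
    have := Finset.card_le_card hsub
    rw [← hκq, Nat.card_Icc] at this
    omega
  -- τ is > i q on positions y in [d+1, n] with y > κ q + i q
  have hτbig : ∀ y, d + 1 ≤ y → y ≤ n → κ q + i q < y → i q < τ y := by
    intro y hy1 hy2 hy3
    by_contra hc
    push_neg at hc
    have hcardA : ((Finset.Icc 1 n).filter (fun m => τ m ≤ i q)).card = i q := by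
      have : ((Finset.Icc 1 n).filter (fun m => τ m ≤ i q)).card = (Finset.Icc 1 (i q)).card := by
        refine Finset.card_nbij τ ?_ ?_ ?_
        · intro m hm
          simp only [Finset.mem_coe, Finset.mem_filter, Finset.mem_Icc] at hm ⊢
          have := hbij.mapsTo ⟨hm.1.1, hm.1.2⟩
          exact ⟨this.1, hm.2⟩
        · intro m hm m' hm' he
          simp only [Finset.coe_filter, Set.mem_setOf_eq, Finset.mem_Icc] at hm hm'
          exact hbij.injOn ⟨hm.1.1, hm.1.2⟩ ⟨hm'.1.1, hm'.1.2⟩ he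
        · intro z hz
          simp only [Finset.coe_Icc, Set.mem_Icc] at hz
          have hzn : z ∈ Set.Icc 1 n := ⟨hz.1, le_trans hz.2 hiq.2⟩
          obtain ⟨m, hm, hmz⟩ := hbij.surjOn hzn
          refine ⟨m, ?_, hmz⟩
          simp only [Finset.coe_filter, Set.mem_setOf_eq, Finset.mem_Icc]
          exact ⟨⟨hm.1, hm.2⟩, by rw [hmz]; exact hz.2⟩
      rw [this, Nat.card_Icc]
      omega
    have hcardA1 : κ q + ((Finset.Icc 1 d).filter (fun m => ¬ i q < τ m)).card = d := by
      have := Finset.card_filter_add_card_filter_not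
        (s := Finset.Icc 1 d) (p := fun ℓ => i q < τ ℓ)
      rw [← hκq] at this
      rw [this, Nat.card_Icc]
      omega
    have hsub2 : (Finset.Icc 1 d).filter (fun m => ¬ i q < τ m) ∪ Finset.Icc (d + 1) y
        ⊆ (Finset.Icc 1 n).filter (fun m => τ m ≤ i q) := by
      intro m hm
      rcases Finset.mem_union.1 hm with hm | hm
      · simp only [Finset.mem_filter, Finset.mem_Icc] at hm ⊢
        exact ⟨⟨hm.1.1, le_trans hm.1.2 hdn⟩, by omega⟩
      · simp only [Finset.mem_Icc] at hm
        simp only [Finset.mem_filter, Finset.mem_Icc]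
        refine ⟨⟨by omega, le_trans hm.2 hy2⟩, ?_⟩
        rcases eq_or_lt_of_le hm.2 with he | hlt
        · rw [he]; exact hc
        · have : τ m < τ y := hmono2 ⟨hm.1, le_trans hm.2 hy2⟩ ⟨hy1, hy2⟩ hlt
          omega
    have hdisj2 : Disjoint ((Finset.Icc 1 d).filter (fun m => ¬ i q < τ m))
        (Finset.Icc (d + 1) y) := by
      rw [Finset.disjoint_left]
      intro m hm hm'
      simp only [Finset.mem_filter, Finset.mem_Icc] at hm hm'
      omega
    have hcard := Finset.card_le_card hsub2
    rw [Finset.card_union_of_disjoint hdisj2, hcardA, Nat.card_Icc] at hcard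
    omega
  -- build the chain list
  set L := C.toList.mergeSort (fun a b => decide (a.1 ≤ b.1)) with hL
  have hperm : List.Perm L C.toList := List.mergeSort_perm _ _
  have hmemL : ∀ s : ℕ × ℕ, s ∈ L ↔ s ∈ C := fun s => by
    rw [hperm.mem_iff, Finset.mem_toList]
  have hnodupL : L.Nodup := hperm.nodup_iff.2 C.nodup_toList
  have hsortL : L.Pairwise (fun a b : ℕ × ℕ => (decide (a.1 ≤ b.1)) = true) :=
    List.pairwise_mergeSort (le := fun a b : ℕ × ℕ => decide (a.1 ≤ b.1))
      (fun a b c h1 h2 => by simp only [decide_eq_true_eq] at *; omega)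
      (fun a b => by simp only [Bool.or_eq_true, decide_eq_true_eq]; omega) _
  have hpwL : L.Pairwise (fun a b => a.1 < b.1 ∧ b.2 < a.2) := by
    refine List.Pairwise.imp_of_mem ?_ (hsortL.and hnodupL)
    intro a b ha hb hr
    obtain ⟨h1, h2⟩ := hr
    rw [decide_eq_true_eq] at h1
    rcases hchain a ((hmemL a).1 ha) b ((hmemL b).1 hb) h2 with h | h
    · exact h
    · omega
  have hboundL : ∀ s ∈ L, s.1 ≤ d ∧ d < s.2 := by
    intro s hs
    have := hSrefl s (hCS s ((hmemL s).1 hs))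
    omega
  have hpw2 : L.Pairwise (fun u v : ℕ × ℕ => u.1 ≠ v.1 ∧ u.2 ≠ v.2) :=
    hpwL.imp (fun h => ⟨Nat.ne_of_lt h.1, (Nat.ne_of_lt h.2).symm⟩)
  have hσmem : ∀ p ∈ C, applySwaps L p.1 = p.2 := by
    intro p hp
    exact applySwaps_swap d L hboundL hpw2 p.1 p.2 (by rw [hmemL]; simpa using hp)
  have hσid : ∀ x, x ≤ d → (∀ p ∈ C, p.1 ≠ x) → applySwaps L x = x := by
    intro x hxd hnp
    refine applySwaps_id L x fun s hs => ⟨hnp s ((hmemL s).1 hs), ?_⟩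
    have := (hboundL s hs).2
    omega
  have hDom : DominatedByW d (fun x => τ (applySwaps L x)) i :=
    hS1 L (fun s hs => hCS s ((hmemL s).1 hs)) hpwL
  set f : ℕ → ℕ := fun x => τ (applySwaps L x) with hf
  have hCfacts : ∀ p ∈ C, 1 ≤ p.1 ∧ p.1 ≤ d - κ q ∧ d + 1 ≤ p.2 ∧ p.2 ≤ n ∧
      κ q + i q < p.2 := by
    intro p hp
    have h1 := hSrefl p (hCS p hp)
    have h2 := hR p hp
    refine ⟨h1.1, ?_, h1.2.2.1, h1.2.2.2, ?_⟩ <;> omega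
  have hσrange : ∀ x, 1 ≤ x → x ≤ d → 1 ≤ applySwaps L x ∧ applySwaps L x ≤ n := by
    intro x h1 h2
    by_cases hex : ∃ p ∈ C, p.1 = x
    · obtain ⟨p, hp, hpx⟩ := hex
      rw [← hpx, hσmem p hp]
      have := hCfacts p hp
      omega
    · push_neg at hex
      rw [hσid x h2 hex]
      omega
  have hinj : Set.InjOn f ↑(Finset.Icc 1 d) := by
    intro x hx x' hx' hfe
    simp only [Finset.coe_Icc, Set.mem_Icc] at hx hx'
    have hre : applySwaps L x = applySwaps L x' :=
      hbij.injOn ⟨(hσrange x hx.1 hx.2).1, (hσrange x hx.1 hx.2).2⟩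
        ⟨(hσrange x' hx'.1 hx'.2).1, (hσrange x' hx'.1 hx'.2).2⟩ hfe
    by_cases he1 : ∃ p ∈ C, p.1 = x <;> by_cases he2 : ∃ p ∈ C, p.1 = x'
    · obtain ⟨p, hp, hpx⟩ := he1
      obtain ⟨r, hr, hrx⟩ := he2
      subst hpx hrx
      rw [hσmem p hp, hσmem r hr] at hre
      by_contra hne
      have hpr : p ≠ r := fun he => hne (by rw [he])
      rcases hchain p hp r hr hpr with h | h <;> omega
    · push_neg at he2
      obtain ⟨p, hp, hpx⟩ := he1
      subst hpx
      rw [hσmem p hp, hσid x' hx'.2 he2] at hre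
      have := hCfacts p hp
      omega
    · push_neg at he1
      obtain ⟨r, hr, hrx⟩ := he2
      subst hrx
      rw [hσid x hx.2 he1, hσmem r hr] at hre
      have := hCfacts r hr
      omega
    · push_neg at he1
      push_neg at he2
      rw [hσid x hx.2 he1, hσid x' hx'.2 he2] at hre
      exact hre
  have hlen : (sortedFirstVals d f).length = d := by
    rw [sortedFirstVals, Finset.length_sort, Finset.card_image_of_injOn hinj, Nat.card_Icc]
    omega
  -- the set B of positions where f is big
  set X := C.image Prod.fst with hX
  have hcardX : X.card = C.card := by
    refine Finset.card_image_of_injOn ?_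
    intro p hp r hr he
    by_contra hne
    rcases hchain p hp r hr hne with h | h <;> omega
  have hXsub : ∀ x ∈ X, 1 ≤ x ∧ x ≤ d - κ q := by
    intro x hx
    obtain ⟨p, hp, hpe⟩ := Finset.mem_image.1 hx
    have := hCfacts p hp
    omega
  set B := X ∪ Finset.Ioc (d - κ q) d with hB
  have hdisjB : Disjoint X (Finset.Ioc (d - κ q) d) := by
    rw [Finset.disjoint_left]
    intro x hx hx'
    have := hXsub x hx
    simp only [Finset.mem_Ioc] at hx'
    omega
  have hcardB : B.card = C.card + κ q := by
    rw [hB, Finset.card_union_of_disjoint hdisjB, hcardX, Nat.card_Ioc]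
    omega
  have hBsub : B ⊆ Finset.Icc 1 d := by
    intro x hx
    rcases Finset.mem_union.1 hx with hx | hx
    · have := hXsub x hx
      simp only [Finset.mem_Icc]
      omega
    · simp only [Finset.mem_Ioc] at hx
      simp only [Finset.mem_Icc]
      omega
  have hfB : ∀ b ∈ B, i q < f b := by
    intro b hb
    rcases Finset.mem_union.1 hb with hb | hb
    · obtain ⟨p, hp, hpe⟩ := Finset.mem_image.1 hb
      have hc := hCfacts p hp
      show i q < τ (applySwaps L b)
      rw [← hpe, hσmem p hp]
      exact hτbig p.2 hc.2.2.1 hc.2.2.2.1 hc.2.2.2.2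
    · rw [Finset.mem_Ioc] at hb
      have hid : applySwaps L b = b := hσid b hb.2 (fun p hp => by
        have := hCfacts p hp; omega)
      show i q < τ (applySwaps L b)
      rw [hid]
      exact hτpos b hb.1 hb.2
  have himgsub : Finset.image f B ⊆
      (Finset.image f (Finset.Icc 1 d)).filter (fun z => i q < z) := by
    intro z hz
    obtain ⟨b, hb, hbe⟩ := Finset.mem_image.1 hz
    rw [Finset.mem_filter]
    exact ⟨Finset.mem_image.2 ⟨b, hBsub hb, hbe⟩, hbe ▸ hfB b hb⟩
  have hcardfB : (Finset.image f B).card = C.card + κ q := by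
    rw [Finset.card_image_of_injOn (hinj.mono (Finset.coe_subset.2 hBsub)), hcardB]
  have hfiltercard : C.card + κ q ≤
      ((Finset.image f (Finset.Icc 1 d)).filter (fun z => i q < z)).card := by
    rw [← hcardfB]
    exact Finset.card_le_card himgsub
  have hfl : ((sortedFirstVals d f).filter (fun z => decide (i q < z))).length =
      ((Finset.image f (Finset.Icc 1 d)).filter (fun z => i q < z)).card := by
    rw [sortedFirstVals]
    exact filter_sort_length _ _
  have hts : C.card ≤ d - κ q := by
    have hsub : X ⊆ Finset.Icc 1 (d - κ q) := by
      intro x hx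
      have := hXsub x hx
      simp only [Finset.mem_Icc]
      omega
    have := Finset.card_le_card hsub
    rw [hcardX, Nat.card_Icc] at this
    omega
  rcases Nat.eq_zero_or_pos C.card with ht0 | ht1
  · rw [ht0]
    push_cast
    omega
  · set k₀ := d - κ q - C.card with hk₀def
    have hk₀ : k₀ < d := by omega
    have hbig : i q < (sortedFirstVals d f).getD k₀ 0 := by
      apply sorted_getD_big (Finset.pairwise_sort ..)
        (by show k₀ < (sortedFirstVals d f).length; rw [hlen]; exact hk₀)
      show (sortedFirstVals d f).length ≤ k₀ +
        ((sortedFirstVals d f).filter (fun z => decide (i q < z))).length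
      rw [hlen, hfl]
      omega
    have hdom := hDom k₀ hk₀
    have hqk : q < k₀ + 1 := by
      by_contra hcc
      push_neg at hcc
      have hm : i (k₀ + 1) ≤ i q := hi.monotoneOn ⟨by omega, by omega⟩ ⟨hq1, hqd⟩ hcc
      omega
    push_cast
    omega
end
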